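/- arXiv:2404.14892 — 4 statements merged into one kernel-verified Lean document; each statement's English description precedes it below -/
import Mathlib

section
/- Let $f:[a,b] \to \mathbb{R}$ be such that $f^{(n+1)}$ is continuous on $[a,b]$, with $a < b$, $\alpha > 0$, $\alpha \notin \{1,2,3,\dots\}$, $n = \lfloor \alpha \rfloor + 1$. Then $\frac{f^{(n)}(a) + f^{(n)}(b)}{2} - \frac{\Gamma(n-\alpha+1)}{2(b-a)^{n-\alpha}}\left[({}^C D_{a^+}^{\alpha} f)(b) + (-1)^n ({}^C D_{b^-}^{\alpha} f)(a)\right] = \frac{b-a}{2} \int_0^1 \left[(1-t)^{n-\alpha} - t^{n-\alpha}\right] f^{(n+1)}(t a + (1-t) b)\, dt$. -/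
/-!
With `β = n - α > 0`, `Γ(β + 1) = β Γ(β)` turns both Caputo derivatives into
`β ∫ (b - t)^(β-1) f⁽ⁿ⁾(t) dt` and `β ∫ (t - a)^(β-1) f⁽ⁿ⁾(t) dt`; integrating by parts against
the kernels `(b - t)^β` and `(t - a)^β`, which vanish at one endpoint, leaves the endpoint values
`(b - a)^β f⁽ⁿ⁾(a)`, `(b - a)^β f⁽ⁿ⁾(b)` and two integrals of `f⁽ⁿ⁺¹⁾`. The substitution
`x = t a + (1 - t) b` identifies their difference with the integral on the right.
-/

noncomputable def caputoLeft (α : ℝ) (n : ℕ) (f : ℝ → ℝ) (a x : ℝ) : ℝ :=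
  (1 / Real.Gamma ((n:ℝ) - α)) * ∫ t in a..x, (x - t) ^ ((n:ℝ) - α - 1) * iteratedDeriv n f t

noncomputable def caputoRight (α : ℝ) (n : ℕ) (f : ℝ → ℝ) (b x : ℝ) : ℝ :=
  ((-1:ℝ)^n / Real.Gamma ((n:ℝ) - α)) * ∫ t in x..b, (t - x) ^ ((n:ℝ) - α - 1) * iteratedDeriv n f t

open intervalIntegral MeasureTheory Set

section IntegrationByParts

variable {a b β : ℝ} {g g' : ℝ → ℝ}

theorem mul_integral_sub_rpow_sub_one_mul (hab : a ≤ b) (hβ : 0 < β)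
    (hg : ContinuousOn g (Icc a b)) (hgg' : ∀ x ∈ Ioo a b, HasDerivAt g (g' x) x)
    (hg' : IntervalIntegrable g' volume a b) :
    β * ∫ t in a..b, (b - t) ^ (β - 1) * g t
      = (b - a) ^ β * g a + ∫ t in a..b, (b - t) ^ β * g' t := by
  have hker : IntervalIntegrable (fun t => -β * (b - t) ^ (β - 1)) volume a b := by
    have := (intervalIntegrable_rpow' (a := b - a) (b := b - b) (r := β - 1) (by linarith))
    simpa using (this.comp_sub_left b).const_mul (-β)
  have hibp := integral_mul_deriv_eq_deriv_mul_of_hasDerivAt (u := fun t => (b - t) ^ β)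
    (u' := fun t => -β * (b - t) ^ (β - 1)) (v := g) (v' := g')
    ((continuous_const.sub continuous_id).rpow_const fun _ => Or.inr hβ.le).continuousOn
    (by rwa [uIcc_of_le hab])
    (fun x hx => by
      rw [min_eq_left hab, max_eq_right hab] at hx
      exact (((hasDerivAt_id' x).const_sub b).rpow_const (p := β)
        (Or.inl (sub_pos.mpr hx.2).ne')).congr_deriv (by ring))
    (fun x hx => hgg' x (by rwa [min_eq_left hab, max_eq_right hab] at hx)) hker hg'
  simp only [sub_self, Real.zero_rpow hβ.ne', zero_mul, zero_sub, mul_assoc,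
    intervalIntegral.integral_const_mul] at hibp
  linarith

theorem mul_integral_rpow_sub_sub_one_mul (hab : a ≤ b) (hβ : 0 < β)
    (hg : ContinuousOn g (Icc a b)) (hgg' : ∀ x ∈ Ioo a b, HasDerivAt g (g' x) x)
    (hg' : IntervalIntegrable g' volume a b) :
    β * ∫ t in a..b, (t - a) ^ (β - 1) * g t
      = (b - a) ^ β * g b - ∫ t in a..b, (t - a) ^ β * g' t := by
  have hker : IntervalIntegrable (fun t => β * (t - a) ^ (β - 1)) volume a b := by
    have := (intervalIntegrable_rpow' (a := a - a) (b := b - a) (r := β - 1) (by linarith))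
    simpa using (this.comp_sub_right a).const_mul β
  have hibp := integral_mul_deriv_eq_deriv_mul_of_hasDerivAt (u := fun t => (t - a) ^ β)
    (u' := fun t => β * (t - a) ^ (β - 1)) (v := g) (v' := g')
    ((continuous_id.sub continuous_const).rpow_const fun _ => Or.inr hβ.le).continuousOn
    (by rwa [uIcc_of_le hab])
    (fun x hx => by
      rw [min_eq_left hab, max_eq_right hab] at hx
      exact (((hasDerivAt_id' x).sub_const a).rpow_const (p := β)
        (Or.inl (sub_pos.mpr hx.1).ne')).congr_deriv (by ring))
    (fun x hx => hgg' x (by rwa [min_eq_left hab, max_eq_right hab] at hx)) hker hg'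
  simp only [sub_self, Real.zero_rpow hβ.ne', zero_mul, sub_zero, mul_assoc,
    intervalIntegral.integral_const_mul] at hibp
  linarith

end IntegrationByParts

theorem integral_zero_one_comp_mul_add_one_sub_mul {a b : ℝ} (hab : a ≠ b) (φ : ℝ → ℝ) :
    ∫ t in (0:ℝ)..1, φ (t * a + (1 - t) * b) = (b - a)⁻¹ * ∫ x in a..b, φ x := by
  have h := integral_comp_mul_add (a := 0) (b := 1) φ (sub_ne_zero.mpr hab) b
  simp only [mul_zero, zero_add, mul_one, sub_add_cancel, smul_eq_mul] at h
  calc ∫ t in (0:ℝ)..1, φ (t * a + (1 - t) * b) = ∫ t in (0:ℝ)..1, φ ((a - b) * t + b) := by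
        congr 1 with t
        ring_nf
    _ = (b - a)⁻¹ * ∫ x in a..b, φ x := by
        rw [h, integral_symm b a, mul_neg, ← neg_mul, ← inv_neg, neg_sub]

theorem integral_zero_one_rpow_sub_rpow_mul {a b : ℝ} (hab : a < b) (β : ℝ) (φ : ℝ → ℝ) :
    ∫ t in (0:ℝ)..1, ((1 - t) ^ β - t ^ β) * φ (t * a + (1 - t) * b)
      = ((b - a) ^ (β + 1))⁻¹ * ∫ x in a..b, ((x - a) ^ β - (b - x) ^ β) * φ x := by
  have hba : 0 < b - a := sub_pos.mpr hab
  have hkernel : ∀ x ∈ uIcc a b, (((x - a) / (b - a)) ^ β - ((b - x) / (b - a)) ^ β) * φ x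
      = ((b - a) ^ β)⁻¹ * (((x - a) ^ β - (b - x) ^ β) * φ x) := by
    intro x hx
    rw [uIcc_of_le hab.le] at hx
    rw [Real.div_rpow (sub_nonneg.mpr hx.1) hba.le, Real.div_rpow (sub_nonneg.mpr hx.2) hba.le]
    ring
  calc ∫ t in (0:ℝ)..1, ((1 - t) ^ β - t ^ β) * φ (t * a + (1 - t) * b)
      = ∫ t in (0:ℝ)..1, (fun x => (((x - a) / (b - a)) ^ β - ((b - x) / (b - a)) ^ β) * φ x)
          (t * a + (1 - t) * b) := by
        congr 1 with t
        dsimp only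
        rw [show (t * a + (1 - t) * b - a) / (b - a) = 1 - t by field_simp; ring,
          show (b - (t * a + (1 - t) * b)) / (b - a) = t by field_simp; ring]
    _ = _ := by
        rw [integral_zero_one_comp_mul_add_one_sub_mul hab.ne
          (fun x => (((x - a) / (b - a)) ^ β - ((b - x) / (b - a)) ^ β) * φ x),
          integral_congr hkernel,
          intervalIntegral.integral_const_mul, ← mul_assoc, ← mul_inv, Real.rpow_add_one hba.ne',
          mul_comm (b - a)]

section Caputo

variable {f : ℝ → ℝ} {n : ℕ}

theorem ContDiff.hasDerivAt_iteratedDeriv (hf : ContDiff ℝ (n + 1) f) (x : ℝ) :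
    HasDerivAt (iteratedDeriv n f) (iteratedDeriv (n + 1) f x) x := by
  rw [iteratedDeriv_succ]
  exact (hf.differentiable_iteratedDeriv n (by exact_mod_cast n.lt_succ_self) x).hasDerivAt

theorem gamma_mul_caputoLeft {α a b : ℝ} (hα : α < n) (hab : a ≤ b)
    (hf : ContDiff ℝ (n + 1) f) :
    Real.Gamma ((n:ℝ) - α + 1) * caputoLeft α n f a b
      = (b - a) ^ ((n:ℝ) - α) * iteratedDeriv n f a
        + ∫ t in a..b, (b - t) ^ ((n:ℝ) - α) * iteratedDeriv (n + 1) f t := by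
  have hβ : 0 < (n:ℝ) - α := sub_pos.mpr hα
  rw [caputoLeft, Real.Gamma_add_one hβ.ne', ← mul_integral_sub_rpow_sub_one_mul hab hβ
    (hf.continuous_iteratedDeriv n (by exact_mod_cast n.le_succ)).continuousOn
    (fun x _ => hf.hasDerivAt_iteratedDeriv x)
    ((hf.continuous_iteratedDeriv (n + 1) le_rfl).intervalIntegrable a b)]
  field_simp [(Real.Gamma_pos_of_pos hβ).ne']

theorem gamma_mul_caputoRight {α a b : ℝ} (hα : α < n) (hab : a ≤ b)
    (hf : ContDiff ℝ (n + 1) f) :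
    Real.Gamma ((n:ℝ) - α + 1) * ((-1:ℝ) ^ n * caputoRight α n f b a)
      = (b - a) ^ ((n:ℝ) - α) * iteratedDeriv n f b
        - ∫ t in a..b, (t - a) ^ ((n:ℝ) - α) * iteratedDeriv (n + 1) f t := by
  have hβ : 0 < (n:ℝ) - α := sub_pos.mpr hα
  rw [caputoRight, Real.Gamma_add_one hβ.ne', ← mul_integral_rpow_sub_sub_one_mul hab hβ
    (hf.continuous_iteratedDeriv n (by exact_mod_cast n.le_succ)).continuousOn
    (fun x _ => hf.hasDerivAt_iteratedDeriv x)
    ((hf.continuous_iteratedDeriv (n + 1) le_rfl).intervalIntegrable a b)]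
  have hsq : (-1:ℝ) ^ n * (-1:ℝ) ^ n = 1 := by rw [← mul_pow]; norm_num
  rw [← mul_assoc ((-1:ℝ) ^ n), ← mul_div_assoc, hsq]
  field_simp [(Real.Gamma_pos_of_pos hβ).ne']

end Caputo

theorem caputo_trapezoid_identity_general (f : ℝ → ℝ) (a b α : ℝ) (n : ℕ)
    (hab : a < b)
    (hn : n = ⌊α⌋₊ + 1) (hf : ContDiff ℝ (n+1) f) :
    (iteratedDeriv n f a + iteratedDeriv n f b) / 2
      - Real.Gamma ((n:ℝ) - α + 1) / (2 * (b - a) ^ ((n:ℝ) - α))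
        * (caputoLeft α n f a b + (-1:ℝ)^n * caputoRight α n f b a)
    = (b - a) / 2 *
        ∫ t in (0:ℝ)..1,
          ((1 - t) ^ ((n:ℝ) - α) - t ^ ((n:ℝ) - α)) * iteratedDeriv (n+1) f (t*a + (1-t)*b) := by
  have hα : α < n := by rw [hn]; push_cast; exact Nat.lt_floor_add_one α
  have hba : 0 < b - a := sub_pos.mpr hab
  have hkernel_int : ∀ k : ℝ → ℝ, Continuous k →
      IntervalIntegrable (fun x => k x ^ ((n:ℝ) - α) * iteratedDeriv (n + 1) f x) volume a b :=
    fun k hk => ((hk.rpow_const fun _ => Or.inr (sub_pos.mpr hα).le).mul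
      (hf.continuous_iteratedDeriv (n + 1) le_rfl)).intervalIntegrable a b
  have hsplit : ∫ x in a..b, ((x - a) ^ ((n:ℝ) - α) - (b - x) ^ ((n:ℝ) - α))
        * iteratedDeriv (n + 1) f x
      = (∫ x in a..b, (x - a) ^ ((n:ℝ) - α) * iteratedDeriv (n + 1) f x)
        - ∫ x in a..b, (b - x) ^ ((n:ℝ) - α) * iteratedDeriv (n + 1) f x := by
    rw [← integral_sub (hkernel_int (· - a) (continuous_sub_right a))
      (hkernel_int (b - ·) (continuous_sub_left b))]
    simp only [sub_mul]
  rw [integral_zero_one_rpow_sub_rpow_mul hab, hsplit, div_mul_eq_mul_div, mul_add,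
    gamma_mul_caputoLeft hα hab.le hf, gamma_mul_caputoRight hα hab.le hf,
    Real.rpow_add_one hba.ne']
  field_simp
  ring

theorem caputo_trapezoid_identity (f : ℝ → ℝ) (a b α : ℝ) (n : ℕ)
    (hab : a < b) (hα : 0 < α) (hαnat : ∀ k : ℕ, 1 ≤ k → α ≠ (k:ℝ))
    (hn : n = ⌊α⌋₊ + 1) (hf : ContDiff ℝ (n+1) f) :
    (iteratedDeriv n f a + iteratedDeriv n f b) / 2
      - Real.Gamma ((n:ℝ) - α + 1) / (2 * (b - a) ^ ((n:ℝ) - α))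
        * (caputoLeft α n f a b + (-1:ℝ)^n * caputoRight α n f b a)
    = (b - a) / 2 *
        ∫ t in (0:ℝ)..1,
          ((1 - t) ^ ((n:ℝ) - α) - t ^ ((n:ℝ) - α)) * iteratedDeriv (n+1) f (t*a + (1-t)*b) :=
  caputo_trapezoid_identity_general f a b α n hab hn hf
end

section
/- Let $f:[a,b] \to \mathbb{R}$ with $f^{(n+1)}$ continuous on $[a,b]$, and let $a \le x < y \le b$, $\alpha > 0$, $\alpha \notin \{1,2,\dots\}$, $n = \lfloor \alpha \rfloor + 1$. Then $\frac{1}{y-x} f^{(n)}(y) - \frac{(-1)^n \Gamma(n-\alpha+1)}{(y-x)^{n-\alpha+1}} ({}^C D_{y^-}^{\alpha} f)(x) = \int_0^1 (1-t)^{n-\alpha} f^{(n+1)}(t x + (1-t) y)\, dt$. -/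
/-! Integrating by parts against `(t - x) ^ μ`, with `μ = n - α > 0`, trades the singular kernel
`(t - x) ^ (μ - 1)` of the Caputo derivative for an integrable one and produces the boundary term
`(y - x) ^ μ f⁽ⁿ⁾(y)`; the factor `μ` is absorbed by `Γ(μ + 1) = μ Γ(μ)`. The affine change of
variables `u = t x + (1 - t) y` then identifies what is left with the integral over `[0, 1]`. -/

open Set intervalIntegral MeasureTheory

theorem intervalIntegrable_sub_rpow {r : ℝ} (hr : -1 < r) (x y : ℝ) :
    IntervalIntegrable (fun t => (t - x) ^ r) volume x y := by
  simpa using (intervalIntegrable_rpow' (a := 0) (b := y - x) hr).comp_sub_right x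

theorem integral_sub_rpow_mul_deriv {F F' : ℝ → ℝ} {x y μ : ℝ} (hμ : 0 < μ)
    (hF : ContinuousOn F (uIcc x y))
    (hFF' : ∀ t ∈ Ioo (min x y) (max x y), HasDerivAt F (F' t) t)
    (hF' : IntervalIntegrable F' volume x y) :
    ∫ t in x..y, (t - x) ^ μ * F' t
      = (y - x) ^ μ * F y - μ * ∫ t in x..y, (t - x) ^ (μ - 1) * F t := by
  have hpow : ContinuousOn (fun t => (t - x) ^ μ) (uIcc x y) :=
    (continuous_sub_right x |>.rpow_const fun _ => Or.inr hμ.le).continuousOn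
  have hpow' : ∀ t ∈ Ioo (min x y) (max x y),
      HasDerivAt (fun t => (t - x) ^ μ) (μ * (t - x) ^ (μ - 1)) t := by
    intro t ht
    have htx : t - x ≠ 0 := sub_ne_zero.2 fun h => by
      rcases le_total x y with hxy | hxy <;> simp_all
    simpa using ((hasDerivAt_id t).sub_const x).rpow_const (p := μ) (Or.inl htx)
  have hker : IntervalIntegrable (fun t => μ * (t - x) ^ (μ - 1)) volume x y :=
    (intervalIntegrable_sub_rpow (by linarith) x y).const_mul μ
  rw [integral_mul_deriv_eq_deriv_mul_of_hasDerivAt hpow hF hpow' hFF' hker hF', sub_self,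
    Real.zero_rpow hμ.ne', zero_mul, sub_zero, ← intervalIntegral.integral_const_mul]
  simp only [mul_assoc]

theorem integral_one_sub_rpow_mul_comp_lineMap (G : ℝ → ℝ) {x y : ℝ} (hxy : x < y) (μ : ℝ) :
    ∫ t in (0:ℝ)..1, (1 - t) ^ μ * G (t * x + (1 - t) * y)
      = ((y - x) ^ (μ + 1))⁻¹ * ∫ u in x..y, (u - x) ^ μ * G u := by
  have hyx : 0 < y - x := sub_pos.2 hxy
  have hsubst := integral_comp_mul_add (a := 0) (b := 1) (fun u => (u - x) ^ μ * G u)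
    (sub_ne_zero.2 hxy.ne) y
  have hcongr : EqOn (fun t => ((x - y) * t + y - x) ^ μ * G ((x - y) * t + y))
      (fun t => (y - x) ^ μ * ((1 - t) ^ μ * G (t * x + (1 - t) * y))) (uIcc 0 1) := by
    intro t ht
    rw [uIcc_of_le zero_le_one] at ht
    dsimp only
    rw [show (x - y) * t + y - x = (y - x) * (1 - t) by ring,
      show (x - y) * t + y = t * x + (1 - t) * y by ring,
      Real.mul_rpow hyx.le (by linarith [ht.2]), mul_assoc]
  simp only [integral_congr hcongr, intervalIntegral.integral_const_mul, mul_zero, zero_add,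
    mul_one, sub_add_cancel, smul_eq_mul] at hsubst
  rw [eq_inv_mul_iff_mul_eq₀ (sub_ne_zero.2 hxy.ne)] at hsubst
  rw [integral_symm y x, Real.rpow_add hyx, Real.rpow_one]
  have hpos : 0 < (y - x) ^ μ := Real.rpow_pos_of_pos hyx μ
  field_simp
  linear_combination -hsubst

theorem neg_one_pow_mul_Gamma_mul_caputoRight {f : ℝ → ℝ} {α : ℝ} {n : ℕ} (x y : ℝ)
    (hα : 0 < (n:ℝ) - α) (hf : ContDiff ℝ (n + 1) f) :
    (-1:ℝ) ^ n * Real.Gamma ((n:ℝ) - α + 1) * caputoRight α n f y x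
      = (y - x) ^ ((n:ℝ) - α) * iteratedDeriv n f y
        - ∫ t in x..y, (t - x) ^ ((n:ℝ) - α) * iteratedDeriv (n + 1) f t := by
  have hdiff := hf.differentiable_iteratedDeriv n (by norm_cast; omega)
  have hparts := integral_sub_rpow_mul_deriv (x := x) (y := y) hα hdiff.continuous.continuousOn
    (fun t _ => iteratedDeriv_succ (f := f) ▸ (hdiff t).hasDerivAt)
    ((hf.continuous_iteratedDeriv (n + 1) le_rfl).intervalIntegrable x y)
  have hsign : (-1:ℝ) ^ n * (-1) ^ n = 1 := by rw [← mul_pow]; norm_num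
  have hΓ := (Real.Gamma_pos_of_pos hα).ne'
  rw [hparts, caputoRight, Real.Gamma_add_one hα.ne']
  field_simp
  linear_combination
    ((n:ℝ) - α) * (∫ t in x..y, (t - x) ^ ((n:ℝ) - α - 1) * iteratedDeriv n f t) * hsign

theorem caputo_right_identity_general (f : ℝ → ℝ) (x y α : ℝ) (n : ℕ)
    (hxy : x < y) (hn : n = ⌊α⌋₊ + 1)
    (hf : ContDiff ℝ (n+1) f) :
    (1 / (y - x)) * iteratedDeriv n f y
      - ((-1:ℝ)^n * Real.Gamma ((n:ℝ) - α + 1) / (y - x) ^ ((n:ℝ) - α + 1))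
        * caputoRight α n f y x
    = ∫ t in (0:ℝ)..1, (1 - t) ^ ((n:ℝ) - α) * iteratedDeriv (n+1) f (t*x + (1-t)*y) := by
  have hα : 0 < (n:ℝ) - α := by
    rw [hn]; push_cast; linarith [Nat.lt_floor_add_one α]
  have hyx : 0 < y - x := sub_pos.2 hxy
  have hpos : 0 < (y - x) ^ ((n:ℝ) - α) := Real.rpow_pos_of_pos hyx _
  rw [integral_one_sub_rpow_mul_comp_lineMap _ hxy, div_mul_eq_mul_div _ ((y - x) ^ _),
    neg_one_pow_mul_Gamma_mul_caputoRight x y hα hf, Real.rpow_add hyx, Real.rpow_one]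
  field_simp
  ring

theorem caputo_right_identity (f : ℝ → ℝ) (a b x y α : ℝ) (n : ℕ)
    (hax : a ≤ x) (hxy : x < y) (hyb : y ≤ b) (hα : 0 < α)
    (hαnat : ∀ k : ℕ, 1 ≤ k → α ≠ (k:ℝ)) (hn : n = ⌊α⌋₊ + 1)
    (hf : ContDiff ℝ (n+1) f) :
    (1 / (y - x)) * iteratedDeriv n f y
      - ((-1:ℝ)^n * Real.Gamma ((n:ℝ) - α + 1) / (y - x) ^ ((n:ℝ) - α + 1))
        * caputoRight α n f y x
    = ∫ t in (0:ℝ)..1, (1 - t) ^ ((n:ℝ) - α) * iteratedDeriv (n+1) f (t*x + (1-t)*y) :=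
  caputo_right_identity_general f x y α n hxy hn hf
end

section
/- Let $0 \le a < b$, $\alpha \in (0,1)$, $n = \lfloor \alpha \rfloor + 1 = 1$, $m \in (0,1]$, and let $f$ be such that $f^{(n+1)}$ is continuous on an interval containing $[a, b/m]$ and $|f^{(n+1)}|$ is $m$-convex on $[0, b/m]$. Then $\left|\frac{f^{(n)}(a) + f^{(n)}(b)}{2} - \frac{\Gamma(n-\alpha+1)}{2(b-a)^{n-\alpha}}\left[({}^C D_{a^+}^{\alpha} f)(b) + (-1)^n ({}^C D_{b^-}^{\alpha} f)(a)\right]\right| \le \frac{b-a}{2}\left(\frac{1}{2(n-\alpha+1)} + \frac{1}{2(n-\alpha+2)}\right)\left(|f^{(n+1)}(a)| + m |f^{(n+1)}(b/m)|\right)$. -/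
/-!
Write `ρ = 1 - α`. An integration by parts against `(t - a) ^ ρ - (b - t) ^ ρ` turns the
left-hand side into `(2 (b - a) ^ ρ)⁻¹ ∫_a^b ((t - a) ^ ρ - (b - t) ^ ρ) f''(t) dt`.
Subadditivity of `x ↦ x ^ ρ` bounds the kernel by `|2t - a - b| ^ ρ`, and `m`-convexity at
`t = s a + m (1 - s) (b / m)` bounds `|f''|` on `[a, b]` by the chord from `|f''(a)|` to
`m |f''(b / m)|`. The weight `|2t - a - b| ^ ρ` is symmetric about the midpoint, so its integral
against this affine bound is the midpoint value `(|f''(a)| + m |f''(b / m)|) / 2` times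
`(b - a) ^ (ρ + 1) / (ρ + 1)`.
-/

open intervalIntegral MeasureTheory Set

lemma intervalIntegrable_sub_const_rpow {r : ℝ} (hr : -1 < r) (a b c : ℝ) :
    IntervalIntegrable (fun t => (t - c) ^ r) volume a b := by
  simpa using (intervalIntegrable_rpow' (a := a - c) (b := b - c) hr).comp_sub_right c

lemma intervalIntegrable_const_sub_rpow {r : ℝ} (hr : -1 < r) (a b c : ℝ) :
    IntervalIntegrable (fun t => (c - t) ^ r) volume a b := by
  simpa using (intervalIntegrable_rpow' (a := c - a) (b := c - b) hr).comp_sub_left c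

lemma integral_rpow_sub_rpow_mul_deriv {ρ a b : ℝ} {g g' : ℝ → ℝ} (hρ : 0 < ρ) (hab : a < b)
    (hg : ∀ t ∈ Icc a b, HasDerivAt g (g' t) t) (hg' : IntervalIntegrable g' volume a b) :
    ∫ t in a..b, ((t - a) ^ ρ - (b - t) ^ ρ) * g' t
      = (b - a) ^ ρ * (g a + g b)
        - ρ * ((∫ t in a..b, (t - a) ^ (ρ - 1) * g t) + ∫ t in a..b, (b - t) ^ (ρ - 1) * g t) := by
  have hgc : ContinuousOn g (uIcc a b) := by
    rw [uIcc_of_le hab.le]; exact HasDerivAt.continuousOn hg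
  have hkernel : ∀ t ∈ Ioo (min a b) (max a b), HasDerivAt (fun t => (t - a) ^ ρ - (b - t) ^ ρ)
      (ρ * (t - a) ^ (ρ - 1) + ρ * (b - t) ^ (ρ - 1)) t := fun t ht => by
    rw [min_eq_left hab.le, max_eq_right hab.le] at ht
    have hl := (Real.hasDerivAt_rpow_const (p := ρ) (Or.inl (sub_pos.2 ht.1).ne')).comp t
      ((hasDerivAt_id t).sub_const a)
    have hr := (Real.hasDerivAt_rpow_const (p := ρ) (Or.inl (sub_pos.2 ht.2).ne')).comp t
      ((hasDerivAt_id t).const_sub b)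
    exact (hl.sub hr).congr_deriv (by ring)
  have hl := intervalIntegrable_sub_const_rpow (r := ρ - 1) (by linarith) a b a
  have hr := intervalIntegrable_const_sub_rpow (r := ρ - 1) (by linarith) a b b
  rw [integral_mul_deriv_eq_deriv_mul_of_hasDerivAt
      (Continuous.continuousOn (by fun_prop (disch := exact hρ.le))) hgc hkernel
      (fun t ht => hg t (Ioo_subset_Icc_self (by simpa [hab.le] using ht)))
      ((hl.const_mul ρ).add (hr.const_mul ρ)) hg',
    integral_congr (g := fun t => ρ * ((t - a) ^ (ρ - 1) * g t) + ρ * ((b - t) ^ (ρ - 1) * g t))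
      fun t _ => by ring,
    integral_add ((hl.mul_continuousOn hgc).const_mul ρ) ((hr.mul_continuousOn hgc).const_mul ρ),
    intervalIntegral.integral_const_mul, intervalIntegral.integral_const_mul, sub_self, sub_self,
    Real.zero_rpow hρ.ne']
  ring

lemma trapezoid_sub_caputo_eq_integral {f : ℝ → ℝ} {a b α : ℝ} (hab : a < b) (hα : α < 1)
    (hf : ContDiff ℝ 2 f) :
    (deriv f a + deriv f b) / 2 - Real.Gamma (1 - α + 1) / (2 * (b - a) ^ (1 - α))
        * (caputoLeft α 1 f a b + (-1 : ℝ) ^ 1 * caputoRight α 1 f b a)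
      = (∫ t in a..b, ((t - a) ^ (1 - α) - (b - t) ^ (1 - α)) * iteratedDeriv 2 f t)
          / (2 * (b - a) ^ (1 - α)) := by
  have hρ : 0 < 1 - α := by linarith
  have hderiv : ∀ t, HasDerivAt (deriv f) (iteratedDeriv 2 f t) t := fun t => by
    simpa [iteratedDeriv_succ, iteratedDeriv_one] using
      ((hf.differentiable_iteratedDeriv 1 (by norm_num)) t).hasDerivAt
  rw [integral_rpow_sub_rpow_mul_deriv hρ hab (fun t _ => hderiv t)
    ((hf.continuous_iteratedDeriv 2 le_rfl).intervalIntegrable a b)]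
  simp only [caputoLeft, caputoRight, Nat.cast_one, iteratedDeriv_one, pow_one]
  rw [Real.Gamma_add_one hρ.ne']
  have := Real.Gamma_pos_of_pos hρ
  have := Real.rpow_pos_of_pos (sub_pos.2 hab) (1 - α)
  field_simp
  ring

namespace Real

lemma abs_rpow_sub_rpow_le {p x y : ℝ} (hx : 0 ≤ x) (hy : 0 ≤ y) (hp : 0 ≤ p) (hp1 : p ≤ 1) :
    |x ^ p - y ^ p| ≤ |x - y| ^ p := by
  wlog hxy : y ≤ x generalizing x y
  · rw [abs_sub_comm, abs_sub_comm x y]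
    exact this hy hx (le_of_not_ge hxy)
  rw [abs_of_nonneg (sub_nonneg.2 (rpow_le_rpow hy hxy hp)), abs_of_nonneg (sub_nonneg.2 hxy)]
  have := rpow_add_le_add_rpow hy (sub_nonneg.2 hxy) hp hp1
  rw [add_sub_cancel] at this
  linarith

lemma integral_abs_rpow_symmetric {c ρ : ℝ} (hc : 0 ≤ c) (hρ : 0 ≤ ρ) :
    ∫ x in -c..c, |x| ^ ρ = 2 * c ^ (ρ + 1) / (ρ + 1) := by
  have hcont : Continuous fun x : ℝ => |x| ^ ρ := (continuous_rpow_const hρ).comp continuous_abs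
  have hhalf : ∫ x in (0:ℝ)..c, |x| ^ ρ = c ^ (ρ + 1) / (ρ + 1) := by
    rw [integral_congr (g := fun x => x ^ ρ) fun x hx => by
      rw [uIcc_of_le hc] at hx; simp only [abs_of_nonneg hx.1]]
    rw [integral_rpow (Or.inl (by linarith)), zero_rpow (by linarith), sub_zero]
  have hneg : ∫ x in -c..0, |x| ^ ρ = ∫ x in (0:ℝ)..c, |x| ^ ρ := by
    simpa using (integral_comp_neg (a := 0) (b := c) fun x => |x| ^ ρ).symm
  rw [← integral_add_adjacent_intervals (b := 0) (hcont.intervalIntegrable _ _)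
    (hcont.intervalIntegrable _ _), hneg, hhalf]
  ring

end Real

lemma integral_abs_two_mul_sub_rpow {a b ρ : ℝ} (hab : a ≤ b) (hρ : 0 ≤ ρ) :
    ∫ t in a..b, |2 * t - (a + b)| ^ ρ = (b - a) ^ (ρ + 1) / (ρ + 1) := by
  rw [integral_comp_mul_sub (fun x => |x| ^ ρ) two_ne_zero, show 2 * a - (a + b) = -(b - a) by ring,
    show 2 * b - (a + b) = b - a by ring, Real.integral_abs_rpow_symmetric (by linarith) hρ,
    smul_eq_mul]
  ring

lemma integral_mul_sub_midpoint_eq_zero {w : ℝ → ℝ} {a b : ℝ} (hw : ∀ t, w (a + b - t) = w t) :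
    ∫ t in a..b, w t * (t - (a + b) / 2) = 0 := by
  have h := integral_comp_sub_left (fun t => w t * (t - (a + b) / 2)) (a + b) (a := a) (b := b)
  simp only [hw, add_sub_cancel_left, add_sub_cancel_right] at h
  have : ∫ t in a..b, w t * (a + b - t - (a + b) / 2) = -∫ t in a..b, w t * (t - (a + b) / 2) := by
    rw [← intervalIntegral.integral_neg]; congr 1; ext t; ring
  linarith

lemma abs_integral_rpow_sub_rpow_mul_le {ρ a b A B : ℝ} (hρ0 : 0 ≤ ρ) (hρ1 : ρ ≤ 1) (hab : a < b)
    {φ : ℝ → ℝ} (hφ : ∀ t ∈ Icc a b, |φ t| ≤ ((b - t) * A + (t - a) * B) / (b - a)) :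
    |∫ t in a..b, ((t - a) ^ ρ - (b - t) ^ ρ) * φ t|
      ≤ (A + B) / 2 * ((b - a) ^ (ρ + 1) / (ρ + 1)) := by
  set w : ℝ → ℝ := fun t => |2 * t - (a + b)| ^ ρ
  have hw : Continuous w := (Real.continuous_rpow_const hρ0).comp (by fun_prop)
  have hw_symm : ∀ t, w (a + b - t) = w t := fun t => by
    simp only [w, show 2 * (a + b - t) - (a + b) = -(2 * t - (a + b)) by ring, abs_neg]
  have hmidpoint : ∀ t, ((b - t) * A + (t - a) * B) / (b - a)
      = (A + B) / 2 + (B - A) / (b - a) * (t - (a + b) / 2) := fun t => by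
    field_simp [(sub_pos.2 hab).ne']; ring
  have hpoint : ∀ t ∈ Icc a b, |((t - a) ^ ρ - (b - t) ^ ρ) * φ t|
      ≤ w t * ((A + B) / 2 + (B - A) / (b - a) * (t - (a + b) / 2)) := fun t ht => by
    have hkernel : |(t - a) ^ ρ - (b - t) ^ ρ| ≤ w t := by
      simpa only [w, show t - a - (b - t) = 2 * t - (a + b) by ring] using
        Real.abs_rpow_sub_rpow_le (sub_nonneg.2 ht.1) (sub_nonneg.2 ht.2) hρ0 hρ1
    rw [abs_mul, ← hmidpoint]
    exact mul_le_mul hkernel (hφ t ht) (abs_nonneg _) (Real.rpow_nonneg (abs_nonneg _) _)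
  have hwg : ∀ g : ℝ → ℝ, Continuous g → IntervalIntegrable (fun t => w t * g t) volume a b :=
    fun g hg => (hw.mul hg).intervalIntegrable a b
  have hw_int : ∫ t in a..b, w t = (b - a) ^ (ρ + 1) / (ρ + 1) :=
    integral_abs_two_mul_sub_rpow hab.le hρ0
  rw [← Real.norm_eq_abs]
  calc ‖∫ t in a..b, ((t - a) ^ ρ - (b - t) ^ ρ) * φ t‖
      ≤ ∫ t in a..b, w t * ((A + B) / 2 + (B - A) / (b - a) * (t - (a + b) / 2)) :=
        norm_integral_le_of_norm_le hab.le
          (ae_of_all _ fun t ht => hpoint t (Ioc_subset_Icc_self ht)) (hwg _ (by fun_prop))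
    _ = ∫ t in a..b, ((A + B) / 2 * w t + (B - A) / (b - a) * (w t * (t - (a + b) / 2))) := by
        congr 1; ext t; ring
    _ = (A + B) / 2 * ((b - a) ^ (ρ + 1) / (ρ + 1)) := by
        rw [integral_add ((hw.intervalIntegrable a b).const_mul _)
            ((hwg _ (by fun_prop)).const_mul _),
          intervalIntegral.integral_const_mul, intervalIntegral.integral_const_mul,
          integral_mul_sub_midpoint_eq_zero hw_symm, hw_int, mul_zero, add_zero]

def MConvexOn (m c : ℝ) (φ : ℝ → ℝ) : Prop :=
  ∀ u ∈ Icc 0 c, ∀ v ∈ Icc 0 c, ∀ t ∈ Icc (0 : ℝ) 1,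
    φ (t * u + m * (1 - t) * v) ≤ t * φ u + m * (1 - t) * φ v

lemma MConvexOn.le_chord {m c a b t : ℝ} {φ : ℝ → ℝ} (hφ : MConvexOn m c φ) (hm : m ≠ 0)
    (ha : a ∈ Icc 0 c) (hb : b / m ∈ Icc 0 c) (hab : a < b) (ht : t ∈ Icc a b) :
    φ t ≤ ((b - t) * φ a + (t - a) * (m * φ (b / m))) / (b - a) := by
  have hba : 0 < b - a := sub_pos.2 hab
  have hs : (b - t) / (b - a) ∈ Icc (0 : ℝ) 1 :=
    ⟨div_nonneg (by linarith [ht.2]) hba.le, (div_le_one hba).2 (by linarith [ht.1])⟩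
  have hpoint : (b - t) / (b - a) * a + m * (1 - (b - t) / (b - a)) * (b / m) = t := by
    field_simp; ring
  have := hφ a ha (b / m) hb _ hs
  rw [hpoint] at this
  calc φ t ≤ _ := this
    _ = _ := by field_simp; ring

theorem caputo_trapezoid_mconvex (f : ℝ → ℝ) (a b α m : ℝ)
    (ha : 0 ≤ a) (hab : a < b) (hα : α ∈ Set.Ioo (0:ℝ) 1) (hm : m ∈ Set.Ioc (0:ℝ) 1)
    (hf : ContDiff ℝ 2 f)
    (hconv : ∀ u ∈ Set.Icc (0:ℝ) (b/m), ∀ v ∈ Set.Icc (0:ℝ) (b/m), ∀ t ∈ Set.Icc (0:ℝ) 1,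
      |iteratedDeriv 2 f (t*u + m*(1-t)*v)|
        ≤ t * |iteratedDeriv 2 f u| + m * (1-t) * |iteratedDeriv 2 f v|) :
    |(deriv f a + deriv f b) / 2
        - Real.Gamma (1 - α + 1) / (2 * (b - a) ^ (1 - α))
          * (caputoLeft α 1 f a b + (-1:ℝ)^1 * caputoRight α 1 f b a)|
      ≤ (b - a) / 2 * (1 / (2*(1 - α + 1)) + 1 / (2*(1 - α + 2)))
          * (|iteratedDeriv 2 f a| + m * |iteratedDeriv 2 f (b/m)|) := by
  obtain ⟨hα0, hα1⟩ := hα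
  obtain ⟨hm0, hm1⟩ := hm
  have hba : 0 < b - a := sub_pos.2 hab
  have hbm : b ≤ b / m := le_div_self (ha.trans hab.le) hm0 hm1
  have hmconv : MConvexOn m (b / m) fun x => |iteratedDeriv 2 f x| := hconv
  have hchord := fun t (ht : t ∈ Icc a b) =>
    hmconv.le_chord hm0.ne' ⟨ha, by linarith⟩ ⟨by linarith, le_rfl⟩ hab ht
  have hbound := abs_integral_rpow_sub_rpow_mul_le (ρ := 1 - α) (by linarith) (by linarith) hab hchord
  have hpow : 0 < (b - a) ^ (1 - α) := Real.rpow_pos_of_pos hba _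
  rw [trapezoid_sub_caputo_eq_integral hab hα1 hf, abs_div, abs_of_pos (mul_pos two_pos hpow)]
  calc _ ≤ (|iteratedDeriv 2 f a| + m * |iteratedDeriv 2 f (b / m)|) / 2
          * ((b - a) ^ (1 - α + 1) / (1 - α + 1)) / (2 * (b - a) ^ (1 - α)) :=
        div_le_div_of_nonneg_right hbound (by positivity)
    _ = (b - a) / 2 * (1 / (2 * (1 - α + 1)))
          * (|iteratedDeriv 2 f a| + m * |iteratedDeriv 2 f (b / m)|) := by
        rw [Real.rpow_add_one hba.ne']
        field_simp
    _ ≤ _ := by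
        gcongr
        exact le_add_of_nonneg_right (by positivity)
end

section
/- Let $0 \le x < y$, $\alpha \in (0,1)$, $n = \lfloor \alpha \rfloor + 1 = 1$, $q > 1$, $p = q/(q-1)$, $m \in (0,1]$, and let $f$ have continuous $(n+1)$-st derivative such that $|f^{(n+1)}|^q$ is $m$-convex on $[0, y/m]$. Then $\left|\frac{1}{y-x} f^{(n)}(y) - \frac{(-1)^n \Gamma(n-\alpha+1)}{(y-x)^{n-\alpha+1}}({}^C D_{y^-}^{\alpha} f)(x)\right| \le \left(\frac{1}{n-\alpha+1}\right)^{1/p}\left(|f^{(n+1)}(x)|^q\, B(2, n-\alpha+1) + m |f^{(n+1)}(y/m)|^q\, \frac{1}{2(n-\alpha)+1}\right)^{1/q}$. -/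
noncomputable def betaFun (u v : ℝ) : ℝ := ∫ t in (0:ℝ)..1, t ^ (u - 1) * (1 - t) ^ (v - 1)

/-! Substituting `s = t x + (1 - t) y` and integrating by parts against `(s - x) ^ (n - α)`
turns the left-hand side into `∫₀¹ (1 - t) ^ (n - α) f⁽ⁿ⁺¹⁾(t x + (1 - t) y) dt`. Hölder's
inequality with the weight `(1 - t) ^ (n - α)` bounds its absolute value by
`(∫ (1 - t) ^ (n - α)) ^ (1/p) (∫ (1 - t) ^ (n - α) |f⁽ⁿ⁺¹⁾|^q) ^ (1/q)`, and `m`-convexity at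
`u = x`, `v = y / m` bounds `|f⁽ⁿ⁺¹⁾(t x + (1 - t) y)|^q` by
`t |f⁽ⁿ⁺¹⁾(x)|^q + m (1 - t) |f⁽ⁿ⁺¹⁾(y / m)|^q`, whose weighted integrals are
`B(2, n - α + 1)` and `1 / (n - α + 2) ≤ 1 / (2 (n - α) + 1)`. -/

open MeasureTheory Set

theorem integral_one_sub_rpow {r : ℝ} (hr : -1 < r) :
    ∫ t in (0:ℝ)..1, (1 - t) ^ r = 1 / (r + 1) := by
  rw [intervalIntegral.integral_comp_sub_left (fun s => s ^ r) 1]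
  norm_num [integral_rpow (Or.inl hr), Real.zero_rpow (by linarith : r + 1 ≠ 0)]

theorem integral_one_sub_rpow_mul_comp_segment (h : ℝ → ℝ) {x y : ℝ} (hxy : x < y)
    (b : ℝ) :
    ∫ t in (0:ℝ)..1, (1 - t) ^ b * h (t * x + (1 - t) * y)
      = ((y - x) ^ (b + 1))⁻¹ * ∫ s in x..y, (s - x) ^ b * h s := by
  have hc : 0 < y - x := sub_pos.mpr hxy
  have hsubst : EqOn (fun t => (1 - t) ^ b * h (t * x + (1 - t) * y))
      (fun t => ((y - x) ^ b)⁻¹ * ((fun s => (s - x) ^ b * h s) ((x - y) * t + y)))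
      (uIcc 0 1) := by
    intro t ht
    rw [uIcc_of_le zero_le_one] at ht
    dsimp only
    rw [show (x - y) * t + y - x = (1 - t) * (y - x) by ring,
      show (x - y) * t + y = t * x + (1 - t) * y by ring,
      Real.mul_rpow (by linarith [ht.2]) hc.le]
    field_simp
  rw [intervalIntegral.integral_congr hsubst, intervalIntegral.integral_const_mul,
    intervalIntegral.integral_comp_mul_add (fun s => (s - x) ^ b * h s) (sub_ne_zero.mpr hxy.ne),
    intervalIntegral.integral_symm, Real.rpow_add_one hc.ne']
  simp only [mul_zero, zero_add, mul_one, sub_add_cancel, smul_eq_mul]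
  rw [show (x - y)⁻¹ = -(y - x)⁻¹ by rw [← neg_sub, inv_neg]]
  field_simp

theorem integral_rpow_sub_mul_deriv {g g' : ℝ → ℝ} {x y b : ℝ} (hxy : x ≤ y) (hb : 0 < b)
    (hg : ContinuousOn g (Icc x y)) (hg' : ∀ s ∈ Ioo x y, HasDerivAt g (g' s) s)
    (hg'i : IntervalIntegrable g' volume x y) :
    ∫ s in x..y, (s - x) ^ b * g' s
      = (y - x) ^ b * g y - b * ∫ s in x..y, (s - x) ^ (b - 1) * g s := by
  have hweight : IntervalIntegrable (fun s => b * (s - x) ^ (b - 1)) volume x y := by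
    refine IntervalIntegrable.const_mul ?_ b
    simpa using (intervalIntegral.intervalIntegrable_rpow' (a := 0) (b := y - x)
      (by linarith : -1 < b - 1)).comp_sub_right x
  have hderiv : ∀ s ∈ Ioo (min x y) (max x y),
      HasDerivAt (fun s => (s - x) ^ b) (b * (s - x) ^ (b - 1)) s := by
    intro s hs
    rw [min_eq_left hxy] at hs
    simpa using
      ((hasDerivAt_id' s).sub_const x).rpow_const (p := b) (Or.inl (sub_pos.mpr hs.1).ne')
  rw [intervalIntegral.integral_mul_deriv_eq_deriv_mul_of_hasDerivAt
    ((continuous_sub_right x).rpow_const (fun _ => Or.inr hb.le)).continuousOn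
    (by rwa [uIcc_of_le hxy]) hderiv (by rwa [min_eq_left hxy, max_eq_right hxy]) hweight hg'i]
  simp only [sub_self, Real.zero_rpow hb.ne', zero_mul, sub_zero, mul_assoc,
    intervalIntegral.integral_const_mul]

theorem iteratedDeriv_div_sub_caputoRight_eq_integral {f : ℝ → ℝ} {n : ℕ} {α x y : ℝ}
    (hf : ContDiff ℝ (n + 1) f) (hα : α < n) (hxy : x < y) :
    (1 / (y - x)) * iteratedDeriv n f y
        - ((-1:ℝ) ^ n * Real.Gamma (n - α + 1) / (y - x) ^ (n - α + 1)) * caputoRight α n f y x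
      = ∫ t in (0:ℝ)..1,
          (1 - t) ^ (n - α) * iteratedDeriv (n + 1) f (t * x + (1 - t) * y) := by
  have hb : 0 < (n : ℝ) - α := sub_pos.mpr hα
  have hc : 0 < y - x := sub_pos.mpr hxy
  have hderiv : ∀ s ∈ Ioo x y, HasDerivAt (iteratedDeriv n f) (iteratedDeriv (n + 1) f s) s :=
    fun s _ => by
      rw [iteratedDeriv_succ]
      exact (hf.differentiable_iteratedDeriv' n s).hasDerivAt
  have hcont : Continuous (iteratedDeriv (n + 1) f) :=
    hf.continuous_iteratedDeriv (n + 1) (by norm_cast)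
  rw [integral_one_sub_rpow_mul_comp_segment _ hxy, integral_rpow_sub_mul_deriv hxy.le hb
    (hf.continuous_iteratedDeriv n (by norm_cast; omega)).continuousOn hderiv
    (hcont.intervalIntegrable x y), caputoRight, Real.Gamma_add_one hb.ne',
    Real.rpow_add_one hc.ne']
  have hsign : ((-1 : ℝ) ^ n) ^ 2 = 1 := by
    rw [← pow_mul, mul_comm, pow_mul, neg_one_sq, one_pow]
  have hΓ : Real.Gamma ((n : ℝ) - α) ≠ 0 := (Real.Gamma_pos_of_pos hb).ne'
  have hpow : (y - x) ^ ((n : ℝ) - α) ≠ 0 := (Real.rpow_pos_of_pos hc _).ne'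
  field_simp
  rw [hsign, one_mul]

theorem ContinuousOn.memLp_restrict_Ioc {h : ℝ → ℝ} {a b : ℝ}
    (hh : ContinuousOn h (Icc a b)) (r : ENNReal) : MemLp h r (volume.restrict (Ioc a b)) := by
  obtain ⟨C, hC⟩ := isCompact_Icc.exists_bound_of_continuousOn hh
  exact MemLp.of_bound ((hh.mono Ioc_subset_Icc_self).aestronglyMeasurable measurableSet_Ioc) C
    ((ae_restrict_iff' measurableSet_Ioc).2 (.of_forall fun t ht => hC t (Ioc_subset_Icc_self ht)))

theorem abs_integral_mul_le_power_mean {w g : ℝ → ℝ} {a b p q : ℝ} (hab : a ≤ b)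
    (hpq : p.HolderConjugate q) (hw : ContinuousOn w (Icc a b)) (hw0 : ∀ t ∈ Icc a b, 0 ≤ w t)
    (hg : ContinuousOn g (Icc a b)) :
    |∫ t in a..b, w t * g t|
      ≤ (∫ t in a..b, w t) ^ (1 / p) * (∫ t in a..b, w t * |g t| ^ q) ^ (1 / q) := by
  have hw0' : ∀ t ∈ Ioc a b, 0 ≤ w t := fun t ht => hw0 t (Ioc_subset_Icc_self ht)
  have hu : ContinuousOn (fun t => w t ^ (1 / p)) (Icc a b) :=
    hw.rpow_const fun _ _ => Or.inr (one_div_nonneg.mpr hpq.nonneg)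
  have hv : ContinuousOn (fun t => w t ^ (1 / q) * |g t|) (Icc a b) :=
    (hw.rpow_const fun _ _ => Or.inr (one_div_nonneg.mpr hpq.symm.nonneg)).mul hg.abs
  have holder := integral_mul_le_Lp_mul_Lq_of_nonneg hpq
    ((ae_restrict_iff' measurableSet_Ioc).2 (.of_forall fun t ht => Real.rpow_nonneg (hw0' t ht) _))
    ((ae_restrict_iff' measurableSet_Ioc).2 (.of_forall fun t ht =>
      mul_nonneg (Real.rpow_nonneg (hw0' t ht) _) (abs_nonneg (g t))))
    (hu.memLp_restrict_Ioc _) (hv.memLp_restrict_Ioc _)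
  simp only [intervalIntegral.integral_of_le hab]
  refine (abs_integral_le_integral_abs).trans (le_of_eq_of_le ?_ (holder.trans_eq ?_))
  · refine setIntegral_congr_fun measurableSet_Ioc fun t ht => ?_
    have hexp : 1 / p + 1 / q = 1 := by simpa using hpq.inv_add_inv_eq_one
    rw [← mul_assoc, ← Real.rpow_add' (hw0' t ht) (by rw [hexp]; exact one_ne_zero), hexp,
      Real.rpow_one, abs_mul, abs_of_nonneg (hw0' t ht)]
  · congr 2 <;> refine setIntegral_congr_fun measurableSet_Ioc fun t ht => ?_
    · rw [← Real.rpow_mul (hw0' t ht), one_div_mul_cancel hpq.ne_zero, Real.rpow_one]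
    · rw [Real.mul_rpow (Real.rpow_nonneg (hw0' t ht) _) (abs_nonneg _),
        ← Real.rpow_mul (hw0' t ht), one_div_mul_cancel hpq.symm.ne_zero, Real.rpow_one]

theorem betaFun_nonneg (u v : ℝ) : 0 ≤ betaFun u v :=
  intervalIntegral.integral_nonneg zero_le_one fun t ht =>
    mul_nonneg (Real.rpow_nonneg ht.1 _) (Real.rpow_nonneg (by linarith [ht.2]) _)

theorem intervalIntegrable_one_sub_rpow {r : ℝ} (hr : -1 < r) :
    IntervalIntegrable (fun t : ℝ => (1 - t) ^ r) volume 0 1 := by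
  simpa using
    ((intervalIntegral.intervalIntegrable_rpow' (a := 0) (b := 1) hr).comp_sub_left 1).symm

theorem integral_one_sub_rpow_mul_le {G : ℝ → ℝ} {b m A B : ℝ} (hb : -1 < b)
    (hG : ContinuousOn G (Icc 0 1))
    (hGle : ∀ t ∈ Icc (0:ℝ) 1, G t ≤ t * A + m * (1 - t) * B) :
    ∫ t in (0:ℝ)..1, (1 - t) ^ b * G t ≤ A * betaFun 2 (b + 1) + m * B * (1 / (b + 2)) := by
  have hw := intervalIntegrable_one_sub_rpow hb
  have hw0 : ∀ t ∈ Icc (0:ℝ) 1, 0 ≤ (1 - t) ^ b :=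
    fun t ht => Real.rpow_nonneg (by linarith [ht.2]) b
  rw [← uIcc_of_le zero_le_one] at hG
  calc ∫ t in (0:ℝ)..1, (1 - t) ^ b * G t
      ≤ ∫ t in (0:ℝ)..1, (1 - t) ^ b * (t * A + m * (1 - t) * B) :=
        intervalIntegral.integral_mono_on zero_le_one (hw.mul_continuousOn hG)
          (hw.mul_continuousOn (by fun_prop))
          fun t ht => mul_le_mul_of_nonneg_left (hGle t ht) (hw0 t ht)
    _ = A * (∫ t in (0:ℝ)..1, t * (1 - t) ^ b)
          + m * B * ∫ t in (0:ℝ)..1, (1 - t) ^ (b + 1) := by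
        rw [← intervalIntegral.integral_const_mul, ← intervalIntegral.integral_const_mul,
          ← intervalIntegral.integral_add]
        · refine intervalIntegral.integral_congr fun t ht => ?_
          rw [uIcc_of_le zero_le_one] at ht
          simp only [Real.rpow_add' (by linarith [ht.2] : 0 ≤ 1 - t) (by linarith : b + 1 ≠ 0),
            Real.rpow_one]
          ring
        · exact (hw.continuousOn_mul (by fun_prop)).const_mul A
        · exact (intervalIntegrable_one_sub_rpow (by linarith)).const_mul _
    _ = A * betaFun 2 (b + 1) + m * B * (1 / (b + 2)) := by
        rw [integral_one_sub_rpow (by linarith), betaFun, add_assoc b 1 1, one_add_one_eq_two]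
        norm_num [Real.rpow_one]

theorem abs_integral_one_sub_rpow_mul_le {G : ℝ → ℝ} {b m p q A B : ℝ} (hb : 0 ≤ b)
    (hpq : p.HolderConjugate q) (hG : ContinuousOn G (Icc 0 1))
    (hGle : ∀ t ∈ Icc (0:ℝ) 1, |G t| ^ q ≤ t * A + m * (1 - t) * B) :
    |∫ t in (0:ℝ)..1, (1 - t) ^ b * G t|
      ≤ (1 / (b + 1)) ^ (1 / p) * (A * betaFun 2 (b + 1) + m * B * (1 / (b + 2))) ^ (1 / q) := by
  have hw0 : ∀ t ∈ Icc (0:ℝ) 1, 0 ≤ (1 - t) ^ b :=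
    fun t ht => Real.rpow_nonneg (by linarith [ht.2]) b
  calc _ ≤ (∫ t in (0:ℝ)..1, (1 - t) ^ b) ^ (1 / p)
        * (∫ t in (0:ℝ)..1, (1 - t) ^ b * |G t| ^ q) ^ (1 / q) :=
      abs_integral_mul_le_power_mean zero_le_one hpq
        ((continuous_sub_left 1).rpow_const fun _ => Or.inr hb).continuousOn hw0 hG
    _ ≤ _ := by
      rw [integral_one_sub_rpow (by linarith)]
      refine mul_le_mul_of_nonneg_left
        (Real.rpow_le_rpow ?_ ?_ (one_div_nonneg.mpr hpq.symm.nonneg)) (by positivity)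
      · exact intervalIntegral.integral_nonneg zero_le_one fun t ht =>
          mul_nonneg (hw0 t ht) (by positivity)
      · exact integral_one_sub_rpow_mul_le (by linarith)
          (hG.abs.rpow_const fun _ _ => Or.inr hpq.symm.nonneg) hGle

theorem caputo_right_mconvex_power_mean (f : ℝ → ℝ) (x y α m p q : ℝ)
    (hx : 0 ≤ x) (hxy : x < y) (hα : α ∈ Set.Ioo (0:ℝ) 1) (hm : m ∈ Set.Ioc (0:ℝ) 1)
    (hq : 1 < q) (hp : p = q / (q - 1)) (hf : ContDiff ℝ 2 f)
    (hconv : ∀ u ∈ Set.Icc (0:ℝ) (y/m), ∀ v ∈ Set.Icc (0:ℝ) (y/m), ∀ t ∈ Set.Icc (0:ℝ) 1,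
      |iteratedDeriv 2 f (t*u + m*(1-t)*v)| ^ q
        ≤ t * |iteratedDeriv 2 f u| ^ q + m * (1-t) * |iteratedDeriv 2 f v| ^ q) :
    |(1 / (y - x)) * deriv f y
        - ((-1:ℝ)^1 * Real.Gamma (1 - α + 1) / (y - x) ^ (1 - α + 1)) * caputoRight α 1 f y x|
      ≤ (1 / (1 - α + 1)) ^ (1/p)
          * (|iteratedDeriv 2 f x| ^ q * betaFun 2 (1 - α + 1)
            + m * |iteratedDeriv 2 f (y/m)| ^ q * (1 / (2*(1 - α) + 1))) ^ (1/q) := by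
  obtain ⟨hα0, hα1⟩ := hα
  obtain ⟨hm0, hm1⟩ := hm
  have hpq : p.HolderConjugate q := hp ▸ (Real.HolderConjugate.conjExponent hq).symm
  have hF : ContinuousOn (fun t => iteratedDeriv 2 f (t * x + (1 - t) * y)) (Icc 0 1) :=
    ((hf.continuous_iteratedDeriv 2 le_rfl).comp (by fun_prop)).continuousOn
  have hmconv : ∀ t ∈ Icc (0:ℝ) 1, |iteratedDeriv 2 f (t * x + (1 - t) * y)| ^ q
      ≤ t * |iteratedDeriv 2 f x| ^ q + m * (1 - t) * |iteratedDeriv 2 f (y / m)| ^ q := by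
    intro t ht
    have hy : 0 ≤ y := by linarith
    have hyym : y ≤ y / m := le_div_self hy hm0 hm1
    have h := hconv x ⟨hx, by linarith⟩ (y / m) ⟨by positivity, le_rfl⟩ t ht
    rwa [show t * x + m * (1 - t) * (y / m) = t * x + (1 - t) * y by field_simp] at h
  have hident := iteratedDeriv_div_sub_caputoRight_eq_integral (n := 1) (α := α)
    (by exact_mod_cast hf) (by norm_num; linarith) hxy
  simp only [Nat.cast_one, iteratedDeriv_one, Nat.reduceAdd] at hident
  have hdenom : 1 / (1 - α + 2) ≤ 1 / (2 * (1 - α) + 1) :=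
    one_div_le_one_div_of_le (by linarith) (by linarith)
  rw [hident]
  refine (abs_integral_one_sub_rpow_mul_le (by linarith) hpq hF hmconv).trans ?_
  gcongr
  exact add_nonneg (mul_nonneg (by positivity) (betaFun_nonneg _ _)) (by positivity)
end
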